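/- arXiv:2503.10467 — 8 statements merged into one kernel-verified Lean document; each statement's English description precedes it below -/
import Mathlib

section
/- If D is a directed subset of a partial order admitting a supremum s, and (x_n) is a non-decreasing sequence in the lower set of D with supremum s, and T: X → Y is a map satisfying T(sup x_n) = sup T(x_n) for all non-decreasing sequences with supremum (in particular T is monotone), then T(s) is the supremum of T(D). -/
/-- If `D` is directed with supremum `s`, `(x n)` is a non-decreasing sequence contained in
the lower set of `D` with supremum `s`, and `T` is monotone and preserves suprema of
non-decreasing sequences, then `T s` is the supremum of `T '' D`. -/
theorem stmt1 {X Y : Type*} [PartialOrder X] [PartialOrder Y]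
    (D : Set X) (s : X) (hD : DirectedOn (· ≤ ·) D) (hs : IsLUB D s)
    (T : X → Y) (hmono : Monotone T)
    (hseq : ∀ (x : ℕ → X) (l : X), Monotone x → IsLUB (Set.range x) l →
      IsLUB (Set.range fun n => T (x n)) (T l))
    (x : ℕ → X) (hx : Monotone x) (hxD : ∀ n, ∃ d ∈ D, x n ≤ d)
    (hxs : IsLUB (Set.range x) s) :
    IsLUB (T '' D) (T s) := by
  have hTx := hseq x s hx hxs
  constructor
  · rintro _ ⟨d, hd, rfl⟩
    exact hmono (hs.1 hd)
  · intro u hu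
    apply hTx.2
    rintro _ ⟨n, rfl⟩
    obtain ⟨d, hd, hxd⟩ := hxD n
    exact le_trans (hmono hxd) (hu ⟨d, hd, rfl⟩)
end

section
/- In a commutative monoid with scalar action of nonnegative reals satisfying the prewedge axioms, if a + v ≤ b + v then a + (1/n)·v ≤ b + (1/n)·v for every positive natural number n, where ≤ is the preorder defined by x ≤ y iff there exists z with x + z = y. -/
open scoped NNReal

/-- Cancellation property (first version) in a prewedge: if `a + v ≤ b + v` (for the
sum-induced preorder `x ≤ y ↔ ∃ z, x + z = y`), then `a + (1/n)•v ≤ b + (1/n)•v` for every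
positive natural `n`. -/
theorem stmt3 {W : Type*} [AddCommMonoid W] [Module ℝ≥0 W] (a b v : W)
    (h : ∃ z, (a + v) + z = b + v) (n : ℕ) (hn : 0 < n) :
    ∃ z, (a + ((n : ℝ≥0))⁻¹ • v) + z = b + ((n : ℝ≥0))⁻¹ • v := by
  obtain ⟨z, hz⟩ := h
  -- iterate: k•a + v + k•z = k•b + v
  have key : ∀ k : ℕ, (k • a + v) + k • z = k • b + v := by
    intro k
    induction k with
    | zero => simp
    | succ k ih =>
      have : ((k+1) • a + v) + (k+1) • z = (k • a + k • z) + ((a + v) + z) := by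
        rw [succ_nsmul, succ_nsmul]; abel
      rw [this, hz, show (k • a + k • z) + (b + v) = b + ((k • a + v) + k • z) by abel,
        ih, succ_nsmul]
      abel
  have hk := key n
  have hc : ((n : ℝ≥0))⁻¹ * (n : ℝ≥0) = 1 := by
    rw [inv_mul_cancel₀]
    exact_mod_cast hn.ne'
  have hsm : ∀ w : W, ((n : ℝ≥0))⁻¹ • (n • w) = w := by
    intro w
    rw [← Nat.cast_smul_eq_nsmul ℝ≥0, smul_smul, hc, one_smul]
  refine ⟨((n : ℝ≥0))⁻¹ • (n • z), ?_⟩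
  have := congrArg (fun w => ((n : ℝ≥0))⁻¹ • w) hk
  simpa [smul_add, hsm] using this
end

section
/- In a wedge, for every v and every λ ∈ (0,∞), λv is the infimum of {η·v : η > λ}. -/
open scoped NNReal

/-! A lower bound `b` of `{η • v : λ < η}` satisfies `b ≤ (λ / η) • v`, hence `η • b ≤ λ • v`, for
every `0 < η < 1`; since `b` is the supremum of the `η • b` with `η < 1`, this gives `b ≤ λ • v`. -/

namespace Wedge

variable {W : Type*} [PartialOrder W] [AddCommMonoid W] [Module ℝ≥0 W]

theorem smul_le_smul_of_le_left (hle : ∀ x y : W, x ≤ y ↔ ∃ z, x + z = y) {a b : ℝ≥0}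
    (hab : a ≤ b) (v : W) : a • v ≤ b • v :=
  (hle _ _).2 ⟨(b - a) • v, by rw [← add_smul, add_tsub_cancel_of_le hab]⟩

theorem smul_le_smul_of_le_right (hle : ∀ x y : W, x ≤ y ↔ ∃ z, x + z = y) (c : ℝ≥0)
    {x y : W} (hxy : x ≤ y) : c • x ≤ c • y := by
  obtain ⟨z, rfl⟩ := (hle x y).1 hxy
  exact (hle _ _).2 ⟨c • z, (smul_add c x z).symm⟩

theorem smul_le_smul_of_mem_lowerBounds (hle : ∀ x y : W, x ≤ y ↔ ∃ z, x + z = y)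
    {l : ℝ≥0} (hl : 0 < l) {b v : W} (hb : b ∈ lowerBounds {w | ∃ η : ℝ≥0, l < η ∧ w = η • v})
    {η : ℝ≥0} (hη : η < 1) : η • b ≤ l • v := by
  rcases eq_zero_or_pos η with rfl | hη₀
  · rw [zero_smul]
    exact (hle _ _).2 ⟨_, zero_add _⟩
  have hlt : l < η⁻¹ * l := lt_mul_left hl (one_lt_inv_iff₀.2 ⟨hη₀, hη⟩)
  calc η • b ≤ η • (η⁻¹ * l) • v := smul_le_smul_of_le_right hle η (hb ⟨_, hlt, rfl⟩)
    _ = l • v := by rw [smul_smul, ← mul_assoc, mul_inv_cancel₀ hη₀.ne', one_mul]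

end Wedge

/-- In a wedge, for every `v` and every `λ > 0`, `λ•v` is the infimum of `{η•v : η > λ}`. -/
theorem stmt6 {W : Type*} [PartialOrder W] [AddCommMonoid W] [Module ℝ≥0 W]
    (hle : ∀ x y : W, x ≤ y ↔ ∃ z, x + z = y)
    (hsupmul : ∀ (l : ℝ≥0) (v : W), 0 < l → IsLUB {w | ∃ η : ℝ≥0, η < l ∧ w = η • v} (l • v))
    (l : ℝ≥0) (v : W) (hl : 0 < l) :
    IsGLB {w | ∃ η : ℝ≥0, l < η ∧ w = η • v} (l • v) := by
  refine ⟨?_, fun b hb => ?_⟩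
  · rintro w ⟨η, hη, rfl⟩
    exact Wedge.smul_le_smul_of_le_left hle hη.le v
  · simpa using (hsupmul 1 b one_pos).2 fun w ⟨η, hη, hw⟩ =>
      hw ▸ Wedge.smul_le_smul_of_mem_lowerBounds hle hl hb hη
end

section
/- In a cone with joins, distributivity of meet over sum holds in the inequality form (x + y) ∧ z ≤ (x ∧ z) + (y ∧ z) for all x, y, z. -/
open scoped NNReal

/-- Distributivity I in a cone with joins: `(x + y) ⊓ z ≤ (x ⊓ z) + (y ⊓ z)`. -/
theorem stmt8 {J : Type*} [CompleteLattice J] [AddCommMonoid J] [Module ℝ≥0 J]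
    (hle : ∀ x y : J, x ≤ y ↔ ∃ z, x + z = y)
    (hscale : ∀ v : J, IsLUB {w | ∃ η : ℝ≥0, η < 1 ∧ w = η • v} v)
    (hinf : ∀ (v : J) (A : Set J), sInf ((fun a => v + a) '' A) = v + sInf A)
    (x y z : J) :
    (x + y) ⊓ z ≤ (x ⊓ z) + (y ⊓ z) := by
  have hadd : ∀ v a b : J, (v + a) ⊓ (v + b) = v + (a ⊓ b) := by
    intro v a b
    have h := hinf v {a, b}
    rwa [Set.image_pair, sInf_pair, sInf_pair] at h
  have hself : ∀ a b : J, a ≤ a + b := fun a b => (hle a (a + b)).mpr ⟨b, rfl⟩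
  have h1 : (x + y) ⊓ z ≤ x + (y ⊓ z) := by
    rw [← hadd]
    exact le_inf inf_le_left (inf_le_right.trans (by rw [add_comm]; exact hself z x))
  have h2 : (x + y) ⊓ z ≤ (y ⊓ z) + (x ⊓ z) := by
    rw [← hadd]
    refine le_inf (by rw [add_comm (y ⊓ z) x]; exact h1) (inf_le_right.trans ?_)
    rw [add_comm]; exact hself z (y ⊓ z)
  calc (x + y) ⊓ z ≤ (y ⊓ z) + (x ⊓ z) := h2
    _ = (x ⊓ z) + (y ⊓ z) := add_comm _ _
end

section
/- In a cone with joins, the modularity identity x + y = (x ∨ y) + (x ∧ y) holds for all x, y; more generally, x + y = z + w implies x + y = (x ∨ z) + (y ∧ w). -/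
open scoped NNReal

/-!
The inequality `x + y ≤ (x ⊔ z) + (y ⊓ w)` is translation invariance of `⊓`. For the reverse,
write `x + y = (x + p) + (y ⊓ w) = (z + q) + (y ⊓ w)`; it suffices that `e + u = f + u` forces
`(e ⊔ f) + u = e + u`. Iterating the equation gives `n • e + u = n • f + u`, and dividing by `n`
gives `e + u / n = f + u / n`, so `e ⊔ f ≤ e + u / n` and `(e ⊔ f) + u ≤ (1 + 1 / n) • (e + u)`;
since every `v` is the supremum of its multiples `η • v` with `η < 1`, letting `n → ∞` yields
`(e ⊔ f) + u ≤ e + u`.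
-/

attribute [local instance] CanonicallyOrderedAdd.toIsOrderedAddMonoid

theorem CanonicallyOrderedAdd.of_le_iff_exists_add {J : Type*} [AddCommMonoid J] [LE J]
    (hle : ∀ x y : J, x ≤ y ↔ ∃ z, x + z = y) : CanonicallyOrderedAdd J where
  exists_add_of_le := fun h => ((hle _ _).1 h).imp fun _ hz => hz.symm
  le_add_self _ b := (hle _ _).2 ⟨b, add_comm _ _⟩
  le_self_add _ b := (hle _ _).2 ⟨b, rfl⟩

theorem add_inv_smul_eq_of_add_eq_add {J : Type*} [AddCommMonoid J] [Module ℝ≥0 J] {e f u : J}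
    (hef : e + u = f + u) (n : ℕ) :
    e + ((n : ℝ≥0) + 1)⁻¹ • u = f + ((n : ℝ≥0) + 1)⁻¹ • u := by
  have hnsmul : ∀ m : ℕ, m • e + u = m • f + u := by
    intro m
    induction m with
    | zero => simp
    | succ m ih =>
      rw [succ_nsmul, succ_nsmul, add_assoc, hef, add_left_comm, ih, add_left_comm, add_assoc]
  have hc : ((n : ℝ≥0) + 1) ≠ 0 := by positivity
  simpa only [← Nat.cast_smul_eq_nsmul ℝ≥0, smul_add, smul_smul, Nat.cast_add_one,
    inv_mul_cancel₀ hc, one_smul] using congrArg (((n : ℝ≥0) + 1)⁻¹ • ·) (hnsmul (n + 1))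

section CanonicallyOrdered

variable {J : Type*} [AddCommMonoid J] [PartialOrder J] [CanonicallyOrderedAdd J] [Module ℝ≥0 J]

instance CanonicallyOrderedAdd.toPosSMulMono : PosSMulMono ℝ≥0 J where
  smul_le_smul_of_nonneg_left η _ a b hab := by
    obtain ⟨c, rfl⟩ := exists_add_of_le hab
    rw [smul_add]
    exact le_self_add

instance CanonicallyOrderedAdd.toSMulPosMono : SMulPosMono ℝ≥0 J where
  smul_le_smul_of_nonneg_right a _ η μ hημ := by
    rw [← add_tsub_cancel_of_le hημ, add_smul]
    exact le_self_add

theorem le_of_forall_le_one_add_inv_smul {a b : J}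
    (ha : IsLUB {w | ∃ η : ℝ≥0, η < 1 ∧ w = η • a} a)
    (h : ∀ n : ℕ, a ≤ (1 + ((n : ℝ≥0) + 1)⁻¹) • b) : a ≤ b := by
  refine ha.2 ?_
  rintro _ ⟨η, hη, rfl⟩
  obtain ⟨n, hn⟩ := exists_nat_one_div_lt (tsub_pos_of_lt hη)
  rw [one_div] at hn
  have hη' : η * (1 + ((n : ℝ≥0) + 1)⁻¹) ≤ 1 :=
    calc η * (1 + ((n : ℝ≥0) + 1)⁻¹) = η + η * ((n : ℝ≥0) + 1)⁻¹ := by ring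
      _ ≤ η + ((n : ℝ≥0) + 1)⁻¹ := add_le_add_right (mul_le_of_le_one_left' hη.le) η
      _ ≤ 1 := by rw [add_comm]; exact (le_tsub_iff_right hη.le).1 hn.le
  calc η • a ≤ η • (1 + ((n : ℝ≥0) + 1)⁻¹) • b := smul_le_smul_of_nonneg_left (h n) η.2
    _ ≤ (1 : ℝ≥0) • b := by
      rw [smul_smul]; exact smul_le_smul_of_nonneg_right hη' zero_le
    _ = b := one_smul _ _

end CanonicallyOrdered

theorem sup_add_eq_of_add_eq_add {J : Type*} [AddCommMonoid J] [SemilatticeSup J]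
    [CanonicallyOrderedAdd J] [Module ℝ≥0 J]
    (hscale : ∀ v : J, IsLUB {w | ∃ η : ℝ≥0, η < 1 ∧ w = η • v} v) {e f u : J}
    (hef : e + u = f + u) : (e ⊔ f) + u = e + u := by
  refine le_antisymm (le_of_forall_le_one_add_inv_smul (hscale _) fun n => ?_)
    (add_le_add_left le_sup_left u)
  set t : ℝ≥0 := ((n : ℝ≥0) + 1)⁻¹
  have hsup : e ⊔ f ≤ e + t • u :=
    sup_le le_self_add (add_inv_smul_eq_of_add_eq_add hef n ▸ le_self_add)
  calc (e ⊔ f) + u ≤ e + t • u + u := add_le_add_left hsup u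
    _ = (e + u) + t • u := add_right_comm _ _ _
    _ ≤ (e + u) + t • (e + u) :=
      add_le_add_right (smul_le_smul_of_nonneg_left le_add_self zero_le) _
    _ = (1 + t) • (e + u) := by rw [add_smul, one_smul]

theorem add_inf_eq_inf_add {J : Type*} [Add J] [CompleteLattice J]
    (hinf : ∀ (v : J) (A : Set J), sInf ((fun a => v + a) '' A) = v + sInf A) (c a b : J) :
    c + (a ⊓ b) = (c + a) ⊓ (c + b) := by
  simpa only [Set.image_pair, sInf_pair] using (hinf c {a, b}).symm

theorem add_eq_sup_add_inf_of_add_eq_add {J : Type*} [AddCommMonoid J] [CompleteLattice J]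
    [CanonicallyOrderedAdd J] [Module ℝ≥0 J]
    (hscale : ∀ v : J, IsLUB {w | ∃ η : ℝ≥0, η < 1 ∧ w = η • v} v)
    (hinf : ∀ (v : J) (A : Set J), sInf ((fun a => v + a) '' A) = v + sInf A) {x y z w : J}
    (h : x + y = z + w) : x + y = (x ⊔ z) + (y ⊓ w) := by
  refine le_antisymm ?_ ?_
  · rw [add_inf_eq_inf_add hinf]
    exact le_inf (add_le_add_left le_sup_left y) (h ▸ add_le_add_left le_sup_right w)
  · have hx : x + (y ⊓ w) ≤ x + y := add_le_add_right inf_le_left x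
    have hz : z + (y ⊓ w) ≤ x + y := h ▸ add_le_add_right inf_le_right z
    obtain ⟨p, hp⟩ := exists_add_of_le hx
    obtain ⟨q, hq⟩ := exists_add_of_le hz
    have hxp : (x + p) + (y ⊓ w) = x + y := by rw [hp, add_right_comm]
    have hzq : (z + q) + (y ⊓ w) = x + y := by rw [hq, add_right_comm]
    calc (x ⊔ z) + (y ⊓ w) ≤ ((x + p) ⊔ (z + q)) + (y ⊓ w) :=
          add_le_add_left (sup_le_sup le_self_add le_self_add) _
      _ = x + y := by rw [sup_add_eq_of_add_eq_add hscale (hxp.trans hzq.symm), hxp]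

/-- Modularity in a cone with joins: `x + y = (x ⊔ y) + (x ⊓ y)`, and more generally
`x + y = z + w` implies `x + y = (x ⊔ z) + (y ⊓ w)`. -/
theorem stmt9 {J : Type*} [CompleteLattice J] [AddCommMonoid J] [Module ℝ≥0 J]
    (hle : ∀ x y : J, x ≤ y ↔ ∃ z, x + z = y)
    (hscale : ∀ v : J, IsLUB {w | ∃ η : ℝ≥0, η < 1 ∧ w = η • v} v)
    (hinf : ∀ (v : J) (A : Set J), sInf ((fun a => v + a) '' A) = v + sInf A) :
    (∀ x y z w : J, x + y = z + w → x + y = (x ⊔ z) + (y ⊓ w)) ∧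
      ∀ x y : J, x + y = (x ⊔ y) + (x ⊓ y) := by
  have := CanonicallyOrderedAdd.of_le_iff_exists_add hle
  have modular : ∀ x y z w : J, x + y = z + w → x + y = (x ⊔ z) + (y ⊓ w) :=
    fun _ _ _ _ => add_eq_sup_add_inf_of_add_eq_add hscale hinf
  refine ⟨modular, fun x y => ?_⟩
  rw [modular x y y x (add_comm x y), inf_comm]
end

section
/- In a cone with joins, for any family (x_i) and any y: sup_i(x_i ∧ y) ≤ (sup_i x_i) ∧ y ≤ sup_i(x_i ∧ y) + ε(y ∨ sup_i x_i). -/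
open scoped NNReal

/-- The part at infinity of an element of a cone: `ε v = inf {λ•v : λ > 0}`. -/
noncomputable def epsPart {J : Type*} [CompleteLattice J] [AddCommMonoid J] [Module ℝ≥0 J]
    (v : J) : J :=
  sInf {w | ∃ l : ℝ≥0, 0 < l ∧ w = l • v}

set_option linter.unusedSectionVars false

section aux
variable {J : Type*} [CompleteLattice J] [AddCommMonoid J] [Module ℝ≥0 J]

lemma aux_add_le_add (hle : ∀ x y : J, x ≤ y ↔ ∃ z, x + z = y) {a b c d : J}
    (h1 : a ≤ b) (h2 : c ≤ d) : a + c ≤ b + d := by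
  obtain ⟨z, hz⟩ := (hle a b).1 h1
  obtain ⟨w, hw⟩ := (hle c d).1 h2
  exact (hle _ _).2 ⟨z + w, by rw [← hz, ← hw]; abel⟩

lemma aux_le_add (hle : ∀ x y : J, x ≤ y ↔ ∃ z, x + z = y) (a c : J) : a ≤ a + c :=
  (hle _ _).2 ⟨c, rfl⟩

lemma aux_smul_le (hle : ∀ x y : J, x ≤ y ↔ ∃ z, x + z = y) {c d : ℝ≥0} (h : c ≤ d) (w : J) :
    c • w ≤ d • w :=
  (hle _ _).2 ⟨(d - c) • w, by rw [← add_smul, add_tsub_cancel_of_le h]⟩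

lemma aux_inf_add (hinf : ∀ (v : J) (A : Set J), sInf ((fun a => v + a) '' A) = v + sInf A)
    (c a b : J) : (c + a) ⊓ (c + b) = c + (a ⊓ b) := by
  have h := hinf c {a, b}
  rwa [Set.image_pair, sInf_pair, sInf_pair] at h

/-- Cancellation nugget: if `a + v ≤ b + v` then `a ≤ b + μ•v` for every `0 < μ ≤ 1`. -/
lemma aux_nugget (hle : ∀ x y : J, x ≤ y ↔ ∃ z, x + z = y)
    (hinf : ∀ (v : J) (A : Set J), sInf ((fun a => v + a) '' A) = v + sInf A)
    {a b v : J} (h : a + v ≤ b + v) {μ : ℝ≥0} (h0 : 0 < μ) (h1 : μ ≤ 1) :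
    a ≤ b + μ • v := by
  set u := a ⊓ b with hu
  have huv : u + v = a + v := by
    have h2 : (v + a) ⊓ (v + b) = v + u := aux_inf_add hinf v a b
    have h3 : (v + a) ⊓ (v + b) = v + a := inf_eq_left.2 (by
      rw [add_comm v a, add_comm v b]; exact h)
    rw [add_comm u v, add_comm a v, ← h2, h3]
  obtain ⟨d, hd⟩ := (hle u a).1 inf_le_left
  have habs : (u + μ • v) + μ • d = u + μ • v := by
    have e1 : (u + v) + d = u + v := by
      calc (u + v) + d = (u + d) + v := by abel
        _ = a + v := by rw [hd]
        _ = u + v := huv.symm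
    have e2 : (μ • u + μ • v) + μ • d = μ • u + μ • v := by
      have h4 := congrArg (fun z => μ • z) e1
      simpa [smul_add] using h4
    have e3 : (1 - μ) • u + μ • u = u := by
      rw [← add_smul, tsub_add_cancel_of_le h1, one_smul]
    calc (u + μ • v) + μ • d
        = (((1 - μ) • u + μ • u) + μ • v) + μ • d := by rw [e3]
      _ = (1 - μ) • u + ((μ • u + μ • v) + μ • d) := by abel
      _ = (1 - μ) • u + (μ • u + μ • v) := by rw [e2]
      _ = ((1 - μ) • u + μ • u) + μ • v := by abel
      _ = u + μ • v := by rw [e3]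
  have hiter : ∀ n : ℕ, (u + μ • v) + ((n : ℝ≥0) * μ) • d = u + μ • v := by
    intro n
    induction n with
    | zero => simp
    | succ k ih =>
      have hcast : ((k + 1 : ℕ) : ℝ≥0) * μ = (k : ℝ≥0) * μ + μ := by push_cast; ring
      rw [hcast, add_smul, ← add_assoc, ih, habs]
  obtain ⟨n, hn⟩ := exists_nat_ge (μ⁻¹)
  have hn1 : 1 ≤ (n : ℝ≥0) * μ := by
    calc (1 : ℝ≥0) = μ⁻¹ * μ := by rw [inv_mul_cancel₀ h0.ne']
      _ ≤ (n : ℝ≥0) * μ := mul_le_mul_left hn μ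
  have hd' : d ≤ ((n : ℝ≥0) * μ) • d := by
    have h5 : ((n : ℝ≥0) * μ) • d = d + ((n : ℝ≥0) * μ - 1) • d := by
      conv_lhs => rw [← tsub_add_cancel_of_le hn1]
      rw [add_smul, one_smul, add_comm]
    rw [h5]
    exact aux_le_add hle d _
  calc a = u + d := hd.symm
    _ ≤ (u + μ • v) + d := aux_add_le_add hle (aux_le_add hle u (μ • v)) le_rfl
    _ ≤ (u + μ • v) + ((n : ℝ≥0) * μ) • d := aux_add_le_add hle le_rfl hd'
    _ = u + μ • v := hiter n
    _ ≤ b + μ • v := aux_add_le_add hle inf_le_right le_rfl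

end aux

/-- Distributivity II in a cone with joins:
`sup_i (x i ⊓ y) ≤ (sup_i x i) ⊓ y ≤ sup_i (x i ⊓ y) + ε (y ⊔ sup_i x i)`. -/
theorem stmt10 {J : Type*} [CompleteLattice J] [AddCommMonoid J] [Module ℝ≥0 J]
    (hle : ∀ x y : J, x ≤ y ↔ ∃ z, x + z = y)
    (hscale : ∀ v : J, IsLUB {w | ∃ η : ℝ≥0, η < 1 ∧ w = η • v} v)
    (hinf : ∀ (v : J) (A : Set J), sInf ((fun a => v + a) '' A) = v + sInf A)
    {ι : Type*} (x : ι → J) (y : J) :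
    (⨆ i, x i ⊓ y) ≤ (⨆ i, x i) ⊓ y ∧
      (⨆ i, x i) ⊓ y ≤ (⨆ i, x i ⊓ y) + epsPart (y ⊔ ⨆ i, x i) := by
  constructor
  · exact le_inf (iSup_le fun i => inf_le_left.trans (le_iSup x i))
      (iSup_le fun i => inf_le_right)
  · set s := ⨆ i, x i with hs
    set m := ⨆ i, x i ⊓ y with hm
    set v := y ⊔ s with hv
    -- key estimate
    have key : ∀ μ : ℝ≥0, 0 < μ → μ ≤ 1 → s ⊓ y ≤ m + (μ + μ) • v := by
      intro μ hμ0 hμ1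
      have hyv : y ≤ v + μ • v := le_sup_left.trans (aux_le_add hle v (μ • v))
      obtain ⟨x₀, hx₀⟩ := (hle y (v + μ • v)).1 hyv
      -- s ≤ m + x₀
      have hsm : s ≤ m + x₀ := by
        refine iSup_le fun i => ?_
        set ei := sInf {w | x i ≤ y + w} with hei
        have hye : x i ≤ y + ei := by
          rw [hei, ← hinf y _]
          refine le_sInf ?_
          rintro z ⟨w, hw, rfl⟩
          exact hw
        have hxe : x i ≤ (x i ⊓ y) + ei := by
          have h2 : x i ≤ (x i + ei) ⊓ (y + ei) := le_inf (aux_le_add hle _ _) hye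
          have h3 : (x i + ei) ⊓ (y + ei) = (x i ⊓ y) + ei := by
            rw [add_comm (x i) ei, add_comm y ei, add_comm (x i ⊓ y) ei]
            exact aux_inf_add hinf ei (x i) y
          exact h3 ▸ h2
        have hex : ei ≤ x₀ := by
          refine sInf_le ?_
          show x i ≤ y + x₀
          rw [hx₀]
          exact ((le_iSup x i).trans le_sup_right).trans (aux_le_add hle v (μ • v))
        exact hxe.trans (aux_add_le_add hle (le_iSup (fun i => x i ⊓ y) i) hex)
      -- easy modularity direction: (s ⊓ y) + v ≤ s + y
      obtain ⟨p, hp⟩ := (hle (s ⊓ y) s).1 inf_le_left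
      obtain ⟨q, hq⟩ := (hle (s ⊓ y) y).1 inf_le_right
      have hvB : v ≤ (s ⊓ y) + (p + q) := by
        refine sup_le ?_ ?_
        · calc y = (s ⊓ y) + q := hq.symm
            _ ≤ ((s ⊓ y) + q) + p := aux_le_add hle _ p
            _ = (s ⊓ y) + (p + q) := by abel
        · calc s = (s ⊓ y) + p := hp.symm
            _ ≤ ((s ⊓ y) + p) + q := aux_le_add hle _ q
            _ = (s ⊓ y) + (p + q) := by abel
      have hBle : (s ⊓ y) + v ≤ s + y := by
        calc (s ⊓ y) + v ≤ (s ⊓ y) + ((s ⊓ y) + (p + q)) := aux_add_le_add hle le_rfl hvB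
          _ = ((s ⊓ y) + p) + ((s ⊓ y) + q) := by abel
          _ = s + y := by rw [hp, hq]
      have hchain : (s ⊓ y) + v ≤ (m + μ • v) + v := by
        calc (s ⊓ y) + v ≤ s + y := hBle
          _ ≤ (m + x₀) + y := aux_add_le_add hle hsm le_rfl
          _ = m + (y + x₀) := by abel
          _ = m + (v + μ • v) := by rw [hx₀]
          _ = (m + μ • v) + v := by abel
      have hfin := aux_nugget hle hinf hchain hμ0 hμ1
      calc s ⊓ y ≤ (m + μ • v) + μ • v := hfin
        _ = m + (μ + μ) • v := by rw [add_smul]; abel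
    -- conclude
    show s ⊓ y ≤ m + epsPart v
    rw [epsPart, ← hinf m _]
    refine le_sInf ?_
    rintro z ⟨w, ⟨l, hl, rfl⟩, rfl⟩
    show s ⊓ y ≤ m + l • v
    set μ := min l 1 / 2 with hμ
    have hμ0 : 0 < μ := div_pos (lt_min hl one_pos) two_pos
    have hhalf : μ + μ = min l 1 := by rw [hμ, add_halves]
    have hμ1 : μ ≤ 1 := by
      have h6 : μ ≤ μ + μ := le_add_self
      rw [hhalf] at h6
      exact h6.trans (min_le_right l 1)
    have hsum : μ + μ ≤ l := by rw [hhalf]; exact min_le_left l 1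
    exact (key μ hμ0 hμ1).trans
      (aux_add_le_add hle le_rfl (aux_smul_le hle hsum v))
end

section
/- Matrix trace Young inequality: for p ∈ (0,1) and q = p/(p−1) < 0, and positive definite Hermitian d×d matrices A, B, one has Tr(AB) ≥ (1/p)Tr(A^p) + (1/q)Tr(B^q), with equality if and only if A^p = B^q. -/
open Matrix Real

lemma young_scalar {p q x y : ℝ} (hp : 0 < p) (hp1 : p < 1) (hq : q = p / (p - 1))
    (hx : 0 < x) (hy : 0 < y) :
    x ^ p / p + y ^ q / q ≤ x * y ∧ (x * y = x ^ p / p + y ^ q / q ↔ x ^ p = y ^ q) := by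
  have hpm : p - 1 < 0 := by linarith
  have hpm' : p - 1 ≠ 0 := hpm.ne
  have hq0 : q < 0 := by rw [hq]; exact div_neg_of_pos_of_neg hp hpm
  have h1p : (1:ℝ) - p ≠ 0 := by intro h; linarith
  set s : ℝ := x * y ^ (1 - p)⁻¹ with hs_def
  have hs : 0 < s := mul_pos hx (rpow_pos_of_pos hy _)
  have hyq : 0 < y ^ q := rpow_pos_of_pos hy _
  have h1 : y ^ q * s = x * y := by
    rw [hs_def, ← mul_assoc, mul_comm (y ^ q) x, mul_assoc, ← rpow_add hy]
    rw [show q + (1 - p)⁻¹ = 1 by rw [hq]; field_simp; ring, rpow_one]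
  have h2 : y ^ q * s ^ p = x ^ p := by
    rw [hs_def, mul_rpow hx.le (rpow_pos_of_pos hy _).le, ← rpow_mul hy.le,
      mul_comm (y ^ q), mul_assoc, ← rpow_add hy,
      show (1 - p)⁻¹ * p + q = 0 by rw [hq]; field_simp; ring, rpow_zero, mul_one]
  have hqinv : 1 / q = 1 - 1 / p := by rw [hq]; field_simp
  have key : x * y - (x ^ p / p + y ^ q / q) = y ^ q / p * (1 + p * (s - 1) - s ^ p) := by
    have : x * y - (x ^ p / p + y ^ q / q)
        = y ^ q * s - (y ^ q * s ^ p / p + y ^ q * (1 - 1/p)) := by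
      rw [h1, h2]
      have : y ^ q / q = y ^ q * (1 / q) := by ring
      rw [this, hqinv]
    rw [this]; field_simp; ring
  have hbern : s ^ p ≤ 1 + p * (s - 1) := by
    have := rpow_one_add_le_one_add_mul_self (s := s - 1) (by linarith) hp.le hp1.le
    simpa using this
  have hcrux : x ^ p = y ^ q ↔ s = 1 := by
    constructor
    · intro h
      have hsp : s ^ p = 1 := by
        have h3 : y ^ q * s ^ p = y ^ q * 1 := by rw [mul_one]; exact h2.trans h
        exact mul_left_cancel₀ hyq.ne' h3
      calc s = (s ^ p) ^ p⁻¹ := (rpow_rpow_inv hs.le hp.ne').symm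
        _ = 1 := by rw [hsp, one_rpow]
    · intro h
      rw [← h2, h, one_rpow, mul_one]
  constructor
  · nlinarith [div_pos hyq hp]
  · constructor
    · intro h
      rw [hcrux]
      by_contra hne
      have hs1 : s - 1 ≠ 0 := fun hh => hne (by linarith)
      have := rpow_one_add_lt_one_add_mul_self (s := s - 1) (by linarith) hs1 hp hp1
      simp only [add_sub_cancel] at this
      nlinarith [div_pos hyq hp]
    · intro h
      rw [hcrux] at h
      have hz : x * y - (x ^ p / p + y ^ q / q) = 0 := by
        rw [key, h]; simp
      linarith

/-- The real power `A^p` of a symmetric real matrix, defined by spectral functional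
calculus through its eigendecomposition. -/
noncomputable def herPow {d : ℕ} {A : Matrix (Fin d) (Fin d) ℝ} (hA : A.IsHermitian)
    (p : ℝ) : Matrix (Fin d) (Fin d) ℝ :=
  (hA.eigenvectorUnitary : Matrix (Fin d) (Fin d) ℝ) *
    Matrix.diagonal (fun i => hA.eigenvalues i ^ p) *
    star (hA.eigenvectorUnitary : Matrix (Fin d) (Fin d) ℝ)

lemma trace_quad {d : ℕ} (a b : Fin d → ℝ) (W : Matrix (Fin d) (Fin d) ℝ) :
    (Matrix.diagonal a * W * Matrix.diagonal b * star W).trace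
      = ∑ i, ∑ j, a i * b j * (W i j) ^ 2 := by
  simp only [Matrix.trace, Matrix.diag_apply, Matrix.mul_apply, Matrix.star_apply, star_trivial]
  refine Finset.sum_congr rfl fun i _ => Finset.sum_congr rfl fun j _ => ?_
  simp [Matrix.diagonal_apply, ite_mul, zero_mul, mul_ite, mul_zero]
  ring

lemma sandwich2 {d : ℕ} (U D E V : Matrix (Fin d) (Fin d) ℝ) (hUU : star U * U = 1) :
    star U * (U * D * E) * V = D * (E * V) := by
  calc star U * (U * D * E) * V = (star U * U) * D * (E * V) := by simp only [Matrix.mul_assoc]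
    _ = D * (E * V) := by rw [hUU, Matrix.one_mul]

lemma sandwich3 {d : ℕ} (X V D : Matrix (Fin d) (Fin d) ℝ) (hVV : star V * V = 1) :
    X * (V * D * star V) * V = X * V * D := by
  calc X * (V * D * star V) * V = X * V * (D * (star V * V)) := by simp only [Matrix.mul_assoc]
    _ = X * V * D := by rw [hVV, Matrix.mul_one]

/-- Matrix trace Young inequality: for `p ∈ (0,1)`, `q = p/(p−1) < 0` and positive definite
symmetric matrices `A, B`, `Tr(AB) ≥ (1/p)Tr(A^p) + (1/q)Tr(B^q)`, with equality iff
`A^p = B^q`. -/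
theorem stmt17 {d : ℕ} (p q : ℝ) (hp : 0 < p) (hp1 : p < 1) (hq : q = p / (p - 1))
    (A B : Matrix (Fin d) (Fin d) ℝ) (hA : A.PosDef) (hB : B.PosDef) :
    (1 / p) * (herPow hA.isHermitian p).trace + (1 / q) * (herPow hB.isHermitian q).trace ≤
        (A * B).trace ∧
      ((A * B).trace =
          (1 / p) * (herPow hA.isHermitian p).trace + (1 / q) * (herPow hB.isHermitian q).trace ↔
        herPow hA.isHermitian p = herPow hB.isHermitian q) := by
  classical
  set U : Matrix (Fin d) (Fin d) ℝ := (hA.isHermitian.eigenvectorUnitary : Matrix (Fin d) (Fin d) ℝ) with hU_def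
  set V : Matrix (Fin d) (Fin d) ℝ := (hB.isHermitian.eigenvectorUnitary : Matrix (Fin d) (Fin d) ℝ) with hV_def
  set a : Fin d → ℝ := hA.isHermitian.eigenvalues with ha_def
  set b : Fin d → ℝ := hB.isHermitian.eigenvalues with hb_def
  have ha : ∀ i, 0 < a i := fun i => hA.eigenvalues_pos i
  have hb : ∀ j, 0 < b j := fun j => hB.eigenvalues_pos j
  have hUU : star U * U = 1 := by
    simpa [hU_def] using unitary.coe_star_mul_self hA.isHermitian.eigenvectorUnitary
  have hUU' : U * star U = 1 := by
    simpa [hU_def] using unitary.coe_mul_star_self hA.isHermitian.eigenvectorUnitary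
  have hVV : star V * V = 1 := by
    simpa [hV_def] using unitary.coe_star_mul_self hB.isHermitian.eigenvectorUnitary
  have hVV' : V * star V = 1 := by
    simpa [hV_def] using unitary.coe_mul_star_self hB.isHermitian.eigenvectorUnitary
  set W : Matrix (Fin d) (Fin d) ℝ := star U * V with hW_def
  have hsW : star W = star V * U := by simp [hW_def]
  have hWW : W * star W = 1 := by
    rw [hW_def, hsW, mul_assoc, ← mul_assoc V, hVV', one_mul, hUU]
  have hWW' : star W * W = 1 := by
    rw [hW_def, hsW, mul_assoc, ← mul_assoc U, hUU', one_mul, hVV]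
  have hAspec : A = U * Matrix.diagonal a * star U := by
    have := hA.isHermitian.spectral_theorem
    simpa [RCLike.ofReal_real_eq_id] using this
  have hBspec : B = V * Matrix.diagonal b * star V := by
    have := hB.isHermitian.spectral_theorem
    simpa [RCLike.ofReal_real_eq_id] using this
  have hrow : ∀ i, ∑ j, (W i j) ^ 2 = 1 := by
    intro i
    have := congrFun (congrFun hWW i) i
    simp only [Matrix.mul_apply, Matrix.star_apply, star_trivial, Matrix.one_apply_eq] at this
    simpa [pow_two] using this
  have hcol : ∀ j, ∑ i, (W i j) ^ 2 = 1 := by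
    intro j
    have := congrFun (congrFun hWW' j) j
    simp only [Matrix.mul_apply, Matrix.star_apply, star_trivial, Matrix.one_apply_eq] at this
    simpa [pow_two, mul_comm] using this
  have htrA : (herPow hA.isHermitian p).trace = ∑ i, a i ^ p := by
    show (U * Matrix.diagonal (fun i => a i ^ p) * star U).trace = _
    rw [Matrix.trace_mul_cycle, hUU, Matrix.one_mul, Matrix.trace_diagonal]
  have htrB : (herPow hB.isHermitian q).trace = ∑ j, b j ^ q := by
    show (V * Matrix.diagonal (fun j => b j ^ q) * star V).trace = _
    rw [Matrix.trace_mul_cycle, hVV, Matrix.one_mul, Matrix.trace_diagonal]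
  have htrAB : (A * B).trace = ∑ i, ∑ j, a i * b j * (W i j) ^ 2 := by
    rw [← trace_quad a b W, hAspec, hBspec, hW_def, hsW]
    rw [show (U * Matrix.diagonal a * star U) * (V * Matrix.diagonal b * star V)
        = (U * Matrix.diagonal a) * (star U * V * Matrix.diagonal b * star V) by
      simp only [Matrix.mul_assoc]]
    rw [Matrix.trace_mul_comm]
    rw [show star U * V * Matrix.diagonal b * star V * (U * Matrix.diagonal a)
        = (star U * V * Matrix.diagonal b * star V * U) * Matrix.diagonal a by
      simp only [Matrix.mul_assoc]]
    rw [Matrix.trace_mul_comm]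
    congr 1
    simp only [Matrix.mul_assoc]
  have hterm : ∀ i j, 0 ≤ (W i j) ^ 2 * (a i * b j - (a i ^ p / p + b j ^ q / q)) := by
    intro i j
    have h1 := (young_scalar hp hp1 hq (ha i) (hb j)).1
    have h2 : (0:ℝ) ≤ a i * b j - (a i ^ p / p + b j ^ q / q) := by linarith
    positivity
  have hsum : ∑ i, ∑ j, (W i j) ^ 2 * (a i * b j - (a i ^ p / p + b j ^ q / q))
      = (A * B).trace - ((1 / p) * (herPow hA.isHermitian p).trace
          + (1 / q) * (herPow hB.isHermitian q).trace) := by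
    rw [htrAB, htrA, htrB]
    have expand : ∀ i j, (W i j) ^ 2 * (a i * b j - (a i ^ p / p + b j ^ q / q))
        = a i * b j * (W i j) ^ 2 - (W i j) ^ 2 * (a i ^ p / p) - (W i j) ^ 2 * (b j ^ q / q) := by
      intro i j; ring
    simp only [expand, Finset.sum_sub_distrib]
    have e1 : ∀ i, ∑ j, (W i j) ^ 2 * (a i ^ p / p) = a i ^ p / p := by
      intro i; rw [← Finset.sum_mul, hrow i, one_mul]
    have e2 : ∀ i, ∑ j, (W j i) ^ 2 * (b i ^ q / q) = b i ^ q / q := by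
      intro i; rw [← Finset.sum_mul, hcol i, one_mul]
    rw [Finset.sum_congr rfl fun i _ => e1 i, Finset.sum_comm (s := Finset.univ)
      (t := Finset.univ) (f := fun i j => (W i j) ^ 2 * (b j ^ q / q))]
    rw [Finset.sum_congr rfl fun j _ => e2 j]
    rw [← Finset.sum_div, ← Finset.sum_div]
    ring
  have hnn : (0:ℝ) ≤ ∑ i, ∑ j, (W i j) ^ 2 * (a i * b j - (a i ^ p / p + b j ^ q / q)) :=
    Finset.sum_nonneg fun i _ => Finset.sum_nonneg fun j _ => hterm i j
  have hterm_iff : ∀ i j, ((W i j) ^ 2 * (a i * b j - (a i ^ p / p + b j ^ q / q)) = 0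
      ↔ a i ^ p * W i j = W i j * b j ^ q) := by
    intro i j
    rcases eq_or_ne (W i j) 0 with h0 | h0
    · simp [h0]
    · have hW2 : (W i j) ^ 2 ≠ 0 := pow_ne_zero _ h0
      constructor
      · intro ht
        have ht' : a i * b j - (a i ^ p / p + b j ^ q / q) = 0 := by
          rcases mul_eq_zero.mp ht with h | h
          · exact absurd h hW2
          · exact h
        have heq : a i ^ p = b j ^ q :=
          (young_scalar hp hp1 hq (ha i) (hb j)).2.mp (by linarith)
        rw [heq, mul_comm]
      · intro hE
        have heq : a i ^ p = b j ^ q := by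
          have : a i ^ p * W i j = b j ^ q * W i j := by rw [hE, mul_comm]
          exact mul_right_cancel₀ h0 this
        have := (young_scalar hp hp1 hq (ha i) (hb j)).2.mpr heq
        rw [show a i * b j - (a i ^ p / p + b j ^ q / q) = 0 by linarith, mul_zero]
  have hall : (∑ i, ∑ j, (W i j) ^ 2 * (a i * b j - (a i ^ p / p + b j ^ q / q)) = 0)
      ↔ ∀ i j, a i ^ p * W i j = W i j * b j ^ q := by
    constructor
    · intro h i j
      have hi := (Finset.sum_eq_zero_iff_of_nonneg
        (fun i _ => Finset.sum_nonneg fun j _ => hterm i j)).mp h i (Finset.mem_univ i)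
      exact (hterm_iff i j).mp
        ((Finset.sum_eq_zero_iff_of_nonneg (fun j _ => hterm i j)).mp hi j (Finset.mem_univ j))
    · intro h
      exact Finset.sum_eq_zero fun i _ => Finset.sum_eq_zero fun j _ =>
        (hterm_iff i j).mpr (h i j)
  have hUW : U * W = V := by rw [hW_def, ← Matrix.mul_assoc, hUU', Matrix.one_mul]
  have hWU : star W * star U = star V := by rw [hsW, Matrix.mul_assoc, hUU', Matrix.mul_one]
  have hmat_iff : (∀ i j, a i ^ p * W i j = W i j * b j ^ q)
      ↔ herPow hA.isHermitian p = herPow hB.isHermitian q := by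
    have hPA : herPow hA.isHermitian p = U * Matrix.diagonal (fun i => a i ^ p) * star U := rfl
    have hPB : herPow hB.isHermitian q = V * Matrix.diagonal (fun j => b j ^ q) * star V := rfl
    constructor
    · intro h
      have hDW : Matrix.diagonal (fun i => a i ^ p) * W
          = W * Matrix.diagonal (fun j => b j ^ q) := by
        ext i j
        rw [Matrix.diagonal_mul, Matrix.mul_diagonal]
        exact h i j
      have hD : Matrix.diagonal (fun i => a i ^ p)
          = W * Matrix.diagonal (fun j => b j ^ q) * star W := by
        rw [← hDW, Matrix.mul_assoc, hWW, Matrix.mul_one]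
      rw [hPA, hPB, hD]
      calc U * (W * Matrix.diagonal (fun j => b j ^ q) * star W) * star U
          = (U * W) * Matrix.diagonal (fun j => b j ^ q) * (star W * star U) := by
            simp only [Matrix.mul_assoc]
        _ = V * Matrix.diagonal (fun j => b j ^ q) * star V := by rw [hUW, hWU]
    · intro h i j
      have h2 := congrArg (fun M => star U * M * V) h
      rw [hPA, hPB] at h2
      rw [sandwich2 U _ _ V hUU, sandwich3 (star U) V _ hVV] at h2
      have h3 : Matrix.diagonal (fun i => a i ^ p) * W
          = W * Matrix.diagonal (fun j => b j ^ q) := by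
        rw [hW_def]
        exact h2
      have := congrFun (congrFun h3 i) j
      rwa [Matrix.diagonal_mul, Matrix.mul_diagonal] at this
  constructor
  · have := hnn
    rw [hsum] at this
    linarith
  · constructor
    · intro h
      refine hmat_iff.mp (hall.mp ?_)
      rw [hsum, h]; ring
    · intro h
      have h0 : ∑ i, ∑ j, (W i j) ^ 2 * (a i * b j - (a i ^ p / p + b j ^ q / q)) = 0 :=
        hall.mpr (hmat_iff.mpr h)
      rw [hsum] at h0
      linarith
end

section
/- Order-theoretic Baire category theorem: let (X, ≤) be a partial order and τ a topology on X such that (i) every nonempty τ-open set contains an order interval [a,b] = {c : a ≤ c ≤ b} with nonempty τ-interior, and (ii) for any sequences a_n ≤ a_{n+1} ≤ b_{n+1} ≤ b_n there exists c with a_n ≤ c ≤ b_n for all n. Then the intersection of countably many τ-dense τ-open sets is τ-dense. -/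
/-- Order-theoretic Baire category theorem: if every nonempty open set contains an order
interval with nonempty interior, and every nested chain `a_n ≤ a_{n+1} ≤ b_{n+1} ≤ b_n` of
sequences admits a point `c` with `a_n ≤ c ≤ b_n` for all `n`, then the intersection of
countably many dense open sets is dense. -/
theorem stmt19 {X : Type*} [PartialOrder X] [TopologicalSpace X]
    (h1 : ∀ U : Set X, IsOpen U → U.Nonempty →
      ∃ a b : X, Set.Icc a b ⊆ U ∧ (interior (Set.Icc a b)).Nonempty)
    (h2 : ∀ a b : ℕ → X,
      (∀ n, a n ≤ a (n + 1) ∧ a (n + 1) ≤ b (n + 1) ∧ b (n + 1) ≤ b n) →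
      ∃ c : X, ∀ n, a n ≤ c ∧ c ≤ b n)
    (U : ℕ → Set X) (hopen : ∀ n, IsOpen (U n)) (hdense : ∀ n, Dense (U n)) :
    Dense (⋂ n, U n) := by
  rw [dense_iff_inter_open]
  intro V hV hVne
  obtain ⟨a0, b0, hsub0, hint0⟩ := h1 V hV hVne
  have key : ∀ p : {p : X × X // (interior (Set.Icc p.1 p.2)).Nonempty}, ∀ n : ℕ,
      ∃ q : X × X, (Set.Icc q.1 q.2 ⊆ interior (Set.Icc p.val.1 p.val.2) ∩ U n)
        ∧ (interior (Set.Icc q.1 q.2)).Nonempty := by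
    intro p n
    have hopen' : IsOpen (interior (Set.Icc p.val.1 p.val.2) ∩ U n) :=
      isOpen_interior.inter (hopen n)
    have hne : (interior (Set.Icc p.val.1 p.val.2) ∩ U n).Nonempty :=
      (hdense n).inter_open_nonempty _ isOpen_interior p.2
    obtain ⟨a, b, hsub, hint⟩ := h1 _ hopen' hne
    exact ⟨(a, b), hsub, hint⟩
  let step : {p : X × X // (interior (Set.Icc p.1 p.2)).Nonempty} → ℕ →
      {p : X × X // (interior (Set.Icc p.1 p.2)).Nonempty} :=
    fun p n => ⟨Classical.choose (key p n), (Classical.choose_spec (key p n)).2⟩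
  let f : ℕ → {p : X × X // (interior (Set.Icc p.1 p.2)).Nonempty} :=
    fun n => Nat.rec ⟨(a0, b0), hint0⟩ (fun n p => step p n) n
  have hstep : ∀ n, Set.Icc (f (n+1)).val.1 (f (n+1)).val.2 ⊆
      interior (Set.Icc (f n).val.1 (f n).val.2) ∩ U n := by
    intro n
    exact (Classical.choose_spec (key (f n) n)).1
  set a : ℕ → X := fun n => (f n).val.1 with ha
  set b : ℕ → X := fun n => (f n).val.2 with hb
  have hle : ∀ n, a n ≤ b n := by
    intro n
    have := (f n).2
    have : (Set.Icc (a n) (b n)).Nonempty :=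
      this.mono interior_subset
    exact Set.nonempty_Icc.1 this
  have hchain : ∀ n, a n ≤ a (n + 1) ∧ a (n + 1) ≤ b (n + 1) ∧ b (n + 1) ≤ b n := by
    intro n
    have hsub : Set.Icc (a (n+1)) (b (n+1)) ⊆ Set.Icc (a n) (b n) :=
      (hstep n).trans (Set.inter_subset_left.trans interior_subset)
    have h1' := hsub ⟨le_refl _, hle (n+1)⟩
    have h2' := hsub ⟨hle (n+1), le_refl _⟩
    exact ⟨h1'.1, hle (n+1), h2'.2⟩
  obtain ⟨c, hc⟩ := h2 a b hchain
  refine ⟨c, ?_, Set.mem_iInter.2 fun n => ?_⟩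
  · exact hsub0 ⟨(hc 0).1, (hc 0).2⟩
  · exact (hstep n ⟨(hc (n+1)).1, (hc (n+1)).2⟩).2
end
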